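/- Let G be a finite nilpotent group with 2 ∤ |G|, 3 ∤ |G| and 5 ∤ |G|. Then for every σ ∈ S₅ and every g ∈ G with g ≠ 1, ind(σ,g)/|G| ≥ ind(σ) + 6/7; moreover, if σ is not conjugate in S₅ to the 5-cycle (12345), then ind(σ,g)/|G| ≥ ind(σ) + 12/7. -/

import Mathlib

/-- The setoid on `α` whose classes are the orbits (cycles) of the permutation `σ`. -/
def sameCycleSetoid {α : Type*} (σ : Equiv.Perm α) : Setoid α :=
  ⟨σ.SameCycle, ⟨fun _ => Equiv.Perm.SameCycle.refl σ _, fun h => h.symm, fun h1 h2 => h1.trans h2⟩⟩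

/-- The number of orbits of a permutation `σ` on `α`. -/
noncomputable def numOrbits {α : Type*} (σ : Equiv.Perm α) : ℕ :=
  Nat.card (Quotient (sameCycleSetoid σ))

/-- The index `ind(σ) = |α| - #orbits(σ)` of a permutation of a finite set. -/
noncomputable def permIndex {α : Type*} [Fintype α] (σ : Equiv.Perm α) : ℕ :=
  Fintype.card α - numOrbits σ

section Aux

private def prodCongrHom (α β : Type*) : Equiv.Perm α × Equiv.Perm β →* Equiv.Perm (α × β) where
  toFun p := p.1.prodCongr p.2
  map_one' := by ext ⟨a, b⟩ <;> simp
  map_mul' p q := by ext ⟨a, b⟩ <;> simp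

private lemma prodCongr_zpow {α β : Type*} (σ : Equiv.Perm α) (e : Equiv.Perm β) (n : ℤ) :
    (σ.prodCongr e) ^ n = (σ ^ n).prodCongr (e ^ n) := by
  have h1 : σ.prodCongr e = prodCongrHom α β (σ, e) := rfl
  have h2 : (σ ^ n).prodCongr (e ^ n) = prodCongrHom α β ((σ, e) ^ n) := rfl
  rw [h1, h2, map_zpow]

private def mulLeftHom (G : Type*) [Group G] : G →* Equiv.Perm G where
  toFun := Equiv.mulLeft
  map_one' := by ext x; simp
  map_mul' a b := by ext x; simp [mul_assoc]

private lemma mulLeftHom_injective (G : Type*) [Group G] :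
    Function.Injective (mulLeftHom G) := by
  intro a b h
  simpa [mulLeftHom] using Equiv.ext_iff.mp h 1

private lemma mulLeft_zpow {G : Type*} [Group G] (g : G) (n : ℤ) :
    (Equiv.mulLeft g) ^ n = Equiv.mulLeft (g ^ n) :=
  (map_zpow (mulLeftHom G) g n).symm

private lemma orderOf_mulLeft {G : Type*} [Group G] (g : G) :
    orderOf (Equiv.mulLeft g) = orderOf g :=
  orderOf_injective (mulLeftHom G) (mulLeftHom_injective G) g

private lemma exists_common_zpow {A B : Type*} [Group A] [Group B] (x : A) (y : B)
    (h : Nat.Coprime (orderOf x) (orderOf y)) (a b : ℤ) :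
    ∃ n : ℤ, x ^ n = x ^ a ∧ y ^ n = y ^ b := by
  have hco : IsCoprime ((orderOf x : ℤ)) ((orderOf y : ℤ)) := by
    rw [Int.isCoprime_iff_gcd_eq_one]
    simpa using h
  obtain ⟨u, v, huv⟩ := hco
  set l : ℤ := (orderOf x : ℤ)
  set d : ℤ := (orderOf y : ℤ)
  have hx : x ^ l = 1 := by rw [zpow_natCast, pow_orderOf_eq_one]
  have hy : y ^ d = 1 := by rw [zpow_natCast, pow_orderOf_eq_one]
  refine ⟨a * v * d + b * u * l, ?_, ?_⟩
  · have heq : a * v * d + b * u * l = a + l * ((b - a) * u) := by linear_combination a * huv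
    rw [heq, zpow_add, zpow_mul, hx, one_zpow, mul_one]
  · have heq : a * v * d + b * u * l = b + d * ((a - b) * v) := by linear_combination b * huv
    rw [heq, zpow_add, zpow_mul, hy, one_zpow, mul_one]

private lemma coprime_of_dvd_120 {l d : ℕ} (hl : l ∣ 120) (h2 : ¬ 2 ∣ d) (h3 : ¬ 3 ∣ d)
    (h5 : ¬ 5 ∣ d) : Nat.Coprime l d := by
  by_contra h
  have hg : Nat.gcd l d ≠ 1 := h
  obtain ⟨p, hp, hpl, hpd⟩ : ∃ p : ℕ, p.Prime ∧ p ∣ l ∧ p ∣ d :=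
    ⟨(Nat.gcd l d).minFac, Nat.minFac_prime hg,
      (Nat.minFac_dvd _).trans (Nat.gcd_dvd_left _ _),
      (Nat.minFac_dvd _).trans (Nat.gcd_dvd_right _ _)⟩
  have hp120 : p ∣ 8 * 15 := by norm_num; exact hpl.trans hl
  have hcases : p = 2 ∨ p = 3 ∨ p = 5 := by
    rcases (Nat.Prime.dvd_mul hp).mp hp120 with h' | h'
    · left
      have : p ∣ 2 ^ 3 := by norm_num; exact h'
      exact (Nat.prime_dvd_prime_iff_eq hp Nat.prime_two).mp (hp.dvd_of_dvd_pow this)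
    · have : p ∣ 3 * 5 := by norm_num; exact h'
      rcases (Nat.Prime.dvd_mul hp).mp this with h'' | h''
      · right; left; exact (Nat.prime_dvd_prime_iff_eq hp (by norm_num)).mp h''
      · right; right; exact (Nat.prime_dvd_prime_iff_eq hp (by norm_num)).mp h''
  rcases hcases with rfl | rfl | rfl
  exacts [h2 hpd, h3 hpd, h5 hpd]

private lemma numOrbits_prodCongr_le {α β : Type*} [Finite α] [Finite β]
    (σ : Equiv.Perm α) (e : Equiv.Perm β)
    (H : ∀ a b : ℤ, ∃ n : ℤ, σ ^ n = σ ^ a ∧ e ^ n = e ^ b) :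
    numOrbits (σ.prodCongr e) ≤ numOrbits σ * numOrbits e := by
  have key : ∀ p q : α × β, (sameCycleSetoid (σ.prodCongr e)).r p q →
      σ.SameCycle p.1 q.1 ∧ e.SameCycle p.2 q.2 := by
    rintro ⟨i, x⟩ ⟨j, y⟩ ⟨n, hn⟩
    rw [prodCongr_zpow] at hn
    exact ⟨⟨n, congrArg Prod.fst hn⟩, ⟨n, congrArg Prod.snd hn⟩⟩
  let f : Quotient (sameCycleSetoid (σ.prodCongr e)) →
      Quotient (sameCycleSetoid σ) × Quotient (sameCycleSetoid e) :=
    Quotient.lift (fun p => (Quotient.mk (sameCycleSetoid σ) p.1,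
        Quotient.mk (sameCycleSetoid e) p.2))
      (fun p q h => by
        obtain ⟨h1, h2⟩ := key p q h
        exact Prod.ext (Quotient.sound h1) (Quotient.sound h2))
  have hf : Function.Injective f := by
    rintro ⟨⟨i, x⟩⟩ ⟨⟨j, y⟩⟩ h
    obtain ⟨h1, h2⟩ := Prod.ext_iff.mp h
    obtain ⟨a, ha⟩ := Quotient.exact h1
    obtain ⟨b, hb⟩ := Quotient.exact h2
    obtain ⟨n, hna, hnb⟩ := H a b
    refine Quotient.sound ⟨n, ?_⟩
    rw [prodCongr_zpow]
    have : (σ ^ n) i = j := by rw [hna]; exact ha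
    have h2' : (e ^ n) x = y := by rw [hnb]; exact hb
    simp [Equiv.prodCongr_apply, *]
  calc numOrbits (σ.prodCongr e) ≤ Nat.card (Quotient (sameCycleSetoid σ) ×
      Quotient (sameCycleSetoid e)) := Nat.card_le_card_of_injective f hf
    _ = numOrbits σ * numOrbits e := Nat.card_prod _ _

private lemma numOrbits_mulLeft_mul {G : Type*} [Group G] [Fintype G] (g : G) :
    numOrbits (Equiv.mulLeft g) * orderOf g ≤ Fintype.card G := by
  set d := orderOf g with hd
  let f : Quotient (sameCycleSetoid (Equiv.mulLeft g)) × Fin d → G :=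
    fun p => g ^ ((p.2 : ℕ)) * p.1.out
  have hf : Function.Injective f := by
    rintro ⟨q1, k1⟩ ⟨q2, k2⟩ h
    simp only [f] at h
    have hs : (sameCycleSetoid (Equiv.mulLeft g)).r q1.out q2.out := by
      refine ⟨(k1 : ℤ) - (k2 : ℤ), ?_⟩
      rw [mulLeft_zpow]
      show g ^ ((k1 : ℤ) - (k2 : ℤ)) * q1.out = q2.out
      have h' : g ^ ((k1 : ℕ) : ℤ) * q1.out = g ^ ((k2 : ℕ) : ℤ) * q2.out := by
        simpa [zpow_natCast] using h
      calc g ^ ((k1 : ℤ) - (k2 : ℤ)) * q1.out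
          = g ^ (-(k2 : ℤ)) * (g ^ ((k1 : ℕ) : ℤ) * q1.out) := by
            rw [← mul_assoc, ← zpow_add]; ring_nf
        _ = g ^ (-(k2 : ℤ)) * (g ^ ((k2 : ℕ) : ℤ) * q2.out) := by rw [h']
        _ = q2.out := by rw [← mul_assoc, ← zpow_add]; simp
    have hq : q1 = q2 := by
      rw [← Quotient.out_eq q1, ← Quotient.out_eq q2]
      exact Quotient.sound hs
    subst hq
    have hpow : g ^ (k1 : ℕ) = g ^ (k2 : ℕ) := mul_right_cancel h
    have hmod : (k1 : ℕ) ≡ (k2 : ℕ) [MOD d] := pow_eq_pow_iff_modEq.mp hpow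
    have : (k1 : ℕ) = (k2 : ℕ) := by
      have := hmod
      unfold Nat.ModEq at this
      rwa [Nat.mod_eq_of_lt k1.isLt, Nat.mod_eq_of_lt k2.isLt] at this
    exact Prod.ext rfl (Fin.ext this)
  have hle := Nat.card_le_card_of_injective f hf
  have hfin : Nat.card (Fin d) = d := by simp
  rwa [Nat.card_prod, hfin, Nat.card_eq_fintype_card (α := G)] at hle

private lemma numOrbits_le_card {α : Type*} [Finite α] (σ : Equiv.Perm α) :
    numOrbits σ ≤ Nat.card α :=
  Nat.card_le_card_of_surjective (Quotient.mk (sameCycleSetoid σ))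
    (fun q => Quotient.inductionOn q fun a => ⟨a, rfl⟩)

private lemma one_le_numOrbits {α : Type*} [Finite α] [Nonempty α] (σ : Equiv.Perm α) :
    1 ≤ numOrbits σ := by
  have : Nonempty (Quotient (sameCycleSetoid σ)) :=
    ⟨Quotient.mk _ (Classical.arbitrary α)⟩
  exact Nat.card_pos

private lemma isConj_of_numOrbits_eq_one (σ : Equiv.Perm (Fin 5)) (h : numOrbits σ = 1) :
    IsConj (Equiv.swap (0 : Fin 5) 4 * Equiv.swap 0 3 * Equiv.swap 0 2 * Equiv.swap 0 1) σ := by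
  have hsub : Subsingleton (Quotient (sameCycleSetoid σ)) :=
    (Nat.card_eq_one_iff_unique.mp h).1
  have hall : ∀ a b : Fin 5, σ.SameCycle a b := fun a b =>
    Quotient.exact (Subsingleton.elim (Quotient.mk (sameCycleSetoid σ) a)
      (Quotient.mk (sameCycleSetoid σ) b))
  have hmove : ∀ y : Fin 5, σ y ≠ y := by
    intro y hy
    obtain ⟨z, hz⟩ := exists_ne y
    obtain ⟨n, hn⟩ := hall y z
    rw [Equiv.Perm.zpow_apply_eq_self_of_apply_eq_self hy] at hn
    exact hz hn.symm
  have hcyc : σ.IsCycle := ⟨0, hmove 0, fun y _ => hall 0 y⟩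
  have hsupp : σ.support = Finset.univ := by
    rw [Finset.eq_univ_iff_forall]
    exact fun y => Equiv.Perm.mem_support.mpr (hmove y)
  have hc : (Equiv.swap (0 : Fin 5) 4 * Equiv.swap 0 3 * Equiv.swap 0 2 * Equiv.swap 0 1)
      = finRotate 5 := by decide
  rw [hc]
  refine (isCycle_finRotate (n := 3)).isConj hcyc ?_
  rw [support_finRotate, hsupp]

end Aux

/-- For a finite nilpotent group `G` with `2,3,5 ∤ |G|`: for every `σ ∈ S₅` and `g ≠ 1`,
`ind(σ,g)/|G| ≥ ind(σ) + 6/7`; moreover if `σ` is not conjugate to the 5-cycle `(12345)`,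
then `ind(σ,g)/|G| ≥ ind(σ) + 12/7`. -/
theorem index_S5_prod (G : Type*) [Group G] [Fintype G] [Group.IsNilpotent G]
    (h2 : ¬ 2 ∣ Fintype.card G) (h3 : ¬ 3 ∣ Fintype.card G) (h5 : ¬ 5 ∣ Fintype.card G) :
    (∀ (σ : Equiv.Perm (Fin 5)) (g : G), g ≠ 1 →
      (permIndex σ : ℝ) + 6 / 7 ≤
        (permIndex (σ.prodCongr (Equiv.mulLeft g)) : ℝ) / Fintype.card G) ∧
    (∀ (σ : Equiv.Perm (Fin 5)) (g : G), g ≠ 1 →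
      ¬ IsConj (Equiv.swap (0 : Fin 5) 4 * Equiv.swap 0 3 * Equiv.swap 0 2 * Equiv.swap 0 1) σ →
      (permIndex σ : ℝ) + 12 / 7 ≤
        (permIndex (σ.prodCongr (Equiv.mulLeft g)) : ℝ) / Fintype.card G) := by
  have main : ∀ (σ : Equiv.Perm (Fin 5)) (g : G), g ≠ 1 → ∀ k : ℕ, k ≤ numOrbits σ →
      (permIndex σ : ℝ) + 6 * k / 7 ≤
        (permIndex (σ.prodCongr (Equiv.mulLeft g)) : ℝ) / Fintype.card G := by
    intro σ g hg k hk
    set C := Fintype.card G with hC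
    have hC1 : 1 ≤ C := Fintype.card_pos
    set d := orderOf g with hdd
    set r := numOrbits σ with hrdef
    set N := numOrbits (Equiv.mulLeft g) with hNdef
    set M := numOrbits (σ.prodCongr (Equiv.mulLeft g)) with hMdef
    have hdC : d ∣ C := orderOf_dvd_card
    have h2d : ¬ 2 ∣ d := fun h => h2 (h.trans hdC)
    have h3d : ¬ 3 ∣ d := fun h => h3 (h.trans hdC)
    have h5d : ¬ 5 ∣ d := fun h => h5 (h.trans hdC)
    have hd1 : d ≠ 1 := fun h => hg (orderOf_eq_one_iff.mp h)
    have hd0 : 0 < d := orderOf_pos g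
    have hd7 : 7 ≤ d := by
      by_contra hlt
      push_neg at hlt
      interval_cases d <;> omega
    have hl120 : orderOf σ ∣ 120 := by
      have h := orderOf_dvd_card (x := σ)
      rwa [Fintype.card_perm, Fintype.card_fin, show Nat.factorial 5 = 120 from rfl] at h
    have hcop : Nat.Coprime (orderOf σ) (orderOf (Equiv.mulLeft g)) := by
      rw [orderOf_mulLeft]
      exact coprime_of_dvd_120 hl120 h2d h3d h5d
    have hMrN : M ≤ r * N :=
      numOrbits_prodCongr_le σ (Equiv.mulLeft g)
        (fun a b => exists_common_zpow σ (Equiv.mulLeft g) hcop a b)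
    have hNd : N * d ≤ C := numOrbits_mulLeft_mul g
    have hMdC : M * d ≤ r * C := by
      calc M * d ≤ r * N * d := Nat.mul_le_mul_right d hMrN
        _ = r * (N * d) := by ring
        _ ≤ r * C := Nat.mul_le_mul_left r hNd
    have hM5C : M ≤ 5 * C := by
      have := numOrbits_le_card (σ.prodCongr (Equiv.mulLeft g))
      rwa [Nat.card_prod, Nat.card_eq_fintype_card, Nat.card_eq_fintype_card,
        Fintype.card_fin] at this
    have hr5 : r ≤ 5 := by
      have := numOrbits_le_card σ
      rwa [Nat.card_eq_fintype_card, Fintype.card_fin] at this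
    have hPI1 : (permIndex σ : ℝ) = 5 - r := by
      unfold permIndex
      rw [Fintype.card_fin]
      rw [← hrdef]
      push_cast [Nat.cast_sub hr5]
      ring
    have hPI2 : (permIndex (σ.prodCongr (Equiv.mulLeft g)) : ℝ) = 5 * C - M := by
      unfold permIndex
      rw [show Fintype.card (Fin 5 × G) = 5 * C by simp [hC]]
      rw [← hMdef]
      push_cast [Nat.cast_sub hM5C]
      ring
    have hC0R : (0 : ℝ) < C := by exact_mod_cast hC1
    rw [hPI1, hPI2, le_div_iff₀ hC0R]
    have h1 : (M : ℝ) * 7 ≤ M * d := by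
      apply mul_le_mul_of_nonneg_left _ (Nat.cast_nonneg M)
      exact_mod_cast hd7
    have h2' : (M : ℝ) * d ≤ r * C := by exact_mod_cast hMdC
    have h3' : (0 : ℝ) ≤ ((r : ℝ) - k) * C := by
      apply mul_nonneg _ (Nat.cast_nonneg C)
      have : (k : ℝ) ≤ r := by exact_mod_cast hk
      linarith
    nlinarith [h1, h2', h3']
  constructor
  · intro σ g hg
    have hr1 : 1 ≤ numOrbits σ := one_le_numOrbits σ
    have := main σ g hg 1 hr1
    norm_num at this
    convert this using 2
  · intro σ g hg hconj
    have hr1 : 1 ≤ numOrbits σ := one_le_numOrbits σ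
    have hr2 : 2 ≤ numOrbits σ := by
      rcases Nat.lt_or_ge (numOrbits σ) 2 with h | h
      · exfalso
        have : numOrbits σ = 1 := by omega
        exact hconj (isConj_of_numOrbits_eq_one σ this)
      · exact h
    have := main σ g hg 2 hr2
    norm_num at this
    convert this using 2
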